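/- arXiv:2011.05162 — 6 statements merged into one kernel-verified Lean document; each statement's English description precedes it below -/
import Mathlib

section
/- For every natural number n ≥ 5 and every index i : Fin n, the root s i, viewed inside the algebraic closure Ē of E, does not lie in solvableByRad F Ē. In other words, no root of the general monic polynomial of degree n ≥ 5 can be obtained from its coefficients by the field operations +, −, ×, ÷ together with successive extraction of m-th roots (the Abel–Ruffini theorem). -/
open MvPolynomial

/-- `E n` is the field of rational functions in `n` variables over `ℚ`. -/
noncomputable abbrev E (n : ℕ) : Type :=
  FractionRing (MvPolynomial (Fin n) ℚ)

/-- `s n i` is the image in `E n` of the variable `X i`; these are the roots of the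
general monic polynomial of degree `n`. -/
noncomputable def s (n : ℕ) (i : Fin n) : E n :=
  algebraMap (MvPolynomial (Fin n) ℚ) (E n) (X i)

/-- `F n` is the subfield of `E n` generated by the images of the elementary symmetric
polynomials `e₁, …, eₙ`, i.e. by the coefficients of the general monic polynomial
`∏ i, (Y - s i)` of degree `n`. -/
noncomputable def F (n : ℕ) : Subfield (E n) :=
  Subfield.closure
    (Set.range fun k : Fin n =>
      algebraMap (MvPolynomial (Fin n) ℚ) (E n) (esymm (Fin n) ℚ ((k : ℕ) + 1)))

/-!
Permuting the variables embeds `Equiv.Perm (Fin n)` into `Gal(E/F)`. The general polynomial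
`∏ i, (Y - s i)` has its coefficients in `F` (they are `± eₖ`), splits in `E` with roots generating
`E`, and is irreducible over `F` because its roots are permuted transitively. Hence `E` is its
splitting field, and a root lying in `solvableByRad F Ē` would make `Gal(E/F)`, and with it
`Equiv.Perm (Fin n)`, solvable, which fails for `n ≥ 5`.
-/

namespace Polynomial

variable {K L ι : Type*} [Field K] [Field L] [Algebra K L] [Fintype ι]

theorem rootSet_eq_range_of_map_eq_prod {p : K[X]} {x : ι → L}
    (hpx : p.map (algebraMap K L) = ∏ i, (X - C (x i))) : p.rootSet L = Set.range x := by
  have hp : p.map (algebraMap K L) ≠ 0 :=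
    hpx ▸ (monic_prod_of_monic _ _ fun i _ => monic_X_sub_C (x i)).ne_zero
  ext a
  rw [mem_rootSet', aeval_def, eval₂_eq_eval_map, and_iff_right hp, hpx, eval_prod,
    Finset.prod_eq_zero_iff]
  simp [sub_eq_zero, eq_comm]

theorem aeval_eq_zero_of_map_eq_prod {p : K[X]} {x : ι → L}
    (hpx : p.map (algebraMap K L) = ∏ i, (X - C (x i))) (j : ι) : aeval (x j) p = 0 :=
  (mem_rootSet'.1 (rootSet_eq_range_of_map_eq_prod hpx ▸ Set.mem_range_self j)).2

theorem isSplittingField_of_map_eq_prod {p : K[X]} {x : ι → L}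
    (hpx : p.map (algebraMap K L) = ∏ i, (X - C (x i)))
    (hx : IntermediateField.adjoin K (Set.range x) = ⊤) : p.IsSplittingField K L :=
  isSplittingField_iff_intermediateField.2
    ⟨hpx ▸ Splits.prod fun i _ => Splits.X_sub_C (x i), rootSet_eq_range_of_map_eq_prod hpx ▸ hx⟩

theorem irreducible_of_map_eq_prod_of_forall_exists_algEquiv [Nonempty ι] {p : K[X]}
    (hp : p.Monic) {x : ι → L} (hx : Function.Injective x)
    (hpx : p.map (algebraMap K L) = ∏ i, (X - C (x i)))
    (hconj : ∀ i j, ∃ g : L ≃ₐ[K] L, g (x i) = x j) : Irreducible p := by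
  classical
  obtain ⟨i⟩ := ‹Nonempty ι›
  have hroot := aeval_eq_zero_of_map_eq_prod hpx
  have hint : IsIntegral K (x i) := ⟨p, hp, hroot i⟩
  have hdeg : p.natDegree = Fintype.card ι := by
    rw [← hp.natDegree_map (algebraMap K L), hpx,
      natDegree_prod _ _ fun j _ => X_sub_C_ne_zero (x j)]
    simp
  have hconj_root : ∀ j, x j ∈ ((minpoly K (x i)).map (algebraMap K L)).roots := fun j => by
    obtain ⟨g, hg⟩ := hconj i j
    rw [mem_roots_map_of_injective (algebraMap K L).injective (minpoly.ne_zero hint), ← hg,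
      ← aeval_def, ← minpoly.algEquiv_eq g, minpoly.aeval]
  have hcard : Fintype.card ι ≤ (minpoly K (x i)).natDegree := by
    rw [← (minpoly.monic hint).natDegree_map (algebraMap K L), ← Finset.card_univ,
      ← Finset.card_image_of_injective _ hx]
    refine card_le_degree_of_subset_roots fun y hy => ?_
    obtain ⟨j, -, rfl⟩ := Finset.mem_image.1 hy
    exact hconj_root j
  have hminpoly : p = minpoly K (x i) :=
    eq_of_monic_of_dvd_of_natDegree_le (minpoly.monic hint) hp (minpoly.dvd K _ (hroot i))
      (hdeg ▸ hcard)
  exact hminpoly ▸ minpoly.irreducible hint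

theorem notMem_solvableByRad_of_isSplittingField {Ω : Type*} [Field Ω] [Algebra K Ω]
    {p : K[X]} [p.IsSplittingField K L] (hp : Irreducible p)
    (hL : ¬Group.IsSolvable (L ≃ₐ[K] L)) {x : Ω} (hx : aeval x p = 0) :
    x ∉ solvableByRad K Ω := by
  intro hmem
  have : Group.IsSolvable (p.SplittingField ≃ₐ[K] p.SplittingField) :=
    isSolvable_gal_of_irreducible hmem hp hx
  exact hL (Group.isSolvable_of_isSolvable_injective
    (f := (IsSplittingField.algEquiv L p).autCongr.toMonoidHom) (MulEquiv.injective _))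

end Polynomial

open Polynomial

namespace AbelRuffini

variable (n : ℕ)

theorem s_injective : Function.Injective (s n) := fun _ _ h =>
  MvPolynomial.X_injective (IsFractionRing.injective (MvPolynomial (Fin n) ℚ) (E n) h)

theorem aeval_s (p : MvPolynomial (Fin n) ℚ) :
    MvPolynomial.aeval (s n) p = algebraMap (MvPolynomial (Fin n) ℚ) (E n) p := by
  conv_rhs => rw [← MvPolynomial.aeval_X_left_apply p]
  exact (MvPolynomial.comp_aeval_apply X (IsScalarTower.toAlgHom ℚ _ (E n)) p).symm

theorem algebraMap_esymm_mem_F {m : ℕ} (hm : m ≤ n) :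
    algebraMap (MvPolynomial (Fin n) ℚ) (E n) (esymm (Fin n) ℚ m) ∈ F n := by
  rcases m with _ | m
  · rw [esymm_zero, map_one]
    exact one_mem _
  · exact Subfield.subset_closure ⟨⟨m, hm⟩, rfl⟩

theorem coeff_prod_X_sub_C_s_mem (k : ℕ) :
    (∏ i, (Polynomial.X - Polynomial.C (s n i))).coeff k ∈ F n := by
  rcases le_or_gt k n with hk | hk
  · have hcard : Multiset.card (Finset.univ.val.map (s n)) = n := by simp
    have hprod : ∏ i, (Polynomial.X - Polynomial.C (s n i)) =
        ((Finset.univ.val.map (s n)).map (Polynomial.X - Polynomial.C ·)).prod := by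
      rw [Finset.prod_eq_multiset_prod, Multiset.map_map]
      rfl
    have hesymm : (Finset.univ.val.map (s n)).esymm (n - k) =
        algebraMap (MvPolynomial (Fin n) ℚ) (E n) (esymm (Fin n) ℚ (n - k)) := by
      rw [← aeval_s, MvPolynomial.aeval_esymm_eq_multiset_esymm]
    rw [hprod, Multiset.prod_X_sub_C_coeff _ (by rw [hcard]; exact hk), hcard, hesymm]
    exact mul_mem (pow_mem (neg_mem (one_mem _)) _) (algebraMap_esymm_mem_F n (Nat.sub_le n k))
  · rw [coeff_eq_zero_of_natDegree_lt]
    · exact zero_mem _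
    · simpa using hk

theorem coeffs_prod_X_sub_C_s_subset :
    ((∏ i, (Polynomial.X - Polynomial.C (s n i))).coeffs : Set (E n)) ⊆
      ((F n).toSubring : Set (E n)) := by
  intro x hx
  obtain ⟨k, -, rfl⟩ := Polynomial.mem_coeffs_iff.1 hx
  exact coeff_prod_X_sub_C_s_mem n k

noncomputable def generalPoly : (F n)[X] :=
  (∏ i, (Polynomial.X - Polynomial.C (s n i))).toSubring _ (coeffs_prod_X_sub_C_s_subset n)

theorem map_generalPoly :
    (generalPoly n).map (algebraMap (F n) (E n)) = ∏ i, (Polynomial.X - Polynomial.C (s n i)) :=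
  map_toSubring _ _ _

theorem generalPoly_monic : (generalPoly n).Monic :=
  (monic_toSubring _ _ _).2 (monic_prod_of_monic _ _ fun i _ => monic_X_sub_C (s n i))

theorem algebraMap_mem_adjoin_range_s (p : MvPolynomial (Fin n) ℚ) :
    algebraMap _ (E n) p ∈ IntermediateField.adjoin (F n) (Set.range (s n)) := by
  induction p using MvPolynomial.induction_on with
  | C q =>
    rw [← MvPolynomial.algebraMap_eq, ← IsScalarTower.algebraMap_apply, eq_ratCast]
    exact SubfieldClass.ratCast_mem _ q
  | add p q hp hq => rw [map_add]; exact add_mem hp hq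
  | mul_X p i hp => rw [map_mul]; exact mul_mem hp (IntermediateField.subset_adjoin _ _ ⟨i, rfl⟩)

theorem adjoin_range_s : IntermediateField.adjoin (F n) (Set.range (s n)) = ⊤ := by
  refine eq_top_iff.2 fun x _ => ?_
  obtain ⟨a, b, -, rfl⟩ := IsFractionRing.div_surjective (A := MvPolynomial (Fin n) ℚ) x
  exact div_mem (algebraMap_mem_adjoin_range_s n a) (algebraMap_mem_adjoin_range_s n b)

theorem isSplittingField_generalPoly : (generalPoly n).IsSplittingField (F n) (E n) :=
  isSplittingField_of_map_eq_prod (map_generalPoly n) (adjoin_range_s n)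

noncomputable def renameRingEquiv (σ : Equiv.Perm (Fin n)) : E n ≃+* E n :=
  IsFractionRing.ringEquivOfRingEquiv (renameEquiv ℚ σ).toRingEquiv

theorem renameRingEquiv_algebraMap (σ : Equiv.Perm (Fin n)) (p : MvPolynomial (Fin n) ℚ) :
    renameRingEquiv n σ (algebraMap _ (E n) p) = algebraMap _ (E n) (rename σ p) := by
  simp [renameRingEquiv]

theorem renameRingEquiv_eqOn_F (σ : Equiv.Perm (Fin n)) :
    Set.EqOn (renameRingEquiv n σ) id (F n) :=
  RingHom.eqOn_field_closure (f := (renameRingEquiv n σ : E n →+* E n)) (g := RingHom.id _)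
    (by rintro _ ⟨k, rfl⟩; simp [renameRingEquiv_algebraMap, rename_esymm])

noncomputable def renameAlgEquiv (σ : Equiv.Perm (Fin n)) : E n ≃ₐ[F n] E n :=
  AlgEquiv.ofRingEquiv (f := renameRingEquiv n σ) fun x => renameRingEquiv_eqOn_F n σ x.2

theorem renameAlgEquiv_algebraMap (σ : Equiv.Perm (Fin n)) (p : MvPolynomial (Fin n) ℚ) :
    renameAlgEquiv n σ (algebraMap _ (E n) p) = algebraMap _ (E n) (rename σ p) :=
  renameRingEquiv_algebraMap n σ p

theorem renameAlgEquiv_s (σ : Equiv.Perm (Fin n)) (i : Fin n) :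
    renameAlgEquiv n σ (s n i) = s n (σ i) := by
  rw [s, renameAlgEquiv_algebraMap, rename_X, s]

theorem algEquiv_ext {g h : E n ≃ₐ[F n] E n}
    (hgh : ∀ p, g (algebraMap (MvPolynomial (Fin n) ℚ) (E n) p) = h (algebraMap _ (E n) p)) :
    g = h :=
  AlgEquiv.ext <| RingHom.congr_fun <| IsLocalization.ringHom_ext (j := (g : E n →+* E n))
    (k := (h : E n →+* E n)) (nonZeroDivisors (MvPolynomial (Fin n) ℚ)) (RingHom.ext hgh)

noncomputable def renameAlgEquivHom : Equiv.Perm (Fin n) →* (E n ≃ₐ[F n] E n) :=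
  MonoidHom.mk' (renameAlgEquiv n) fun σ τ =>
    algEquiv_ext n fun p => by
      simp only [AlgEquiv.mul_apply, renameAlgEquiv_algebraMap, rename_rename, Equiv.Perm.coe_mul]

theorem renameAlgEquivHom_injective : Function.Injective (renameAlgEquivHom n) := fun σ τ h =>
  Equiv.ext fun i => s_injective n <| by
    rw [← renameAlgEquiv_s, ← renameAlgEquiv_s]
    exact DFunLike.congr_fun h (s n i)

theorem not_isSolvable_algEquiv (hn : 5 ≤ n) : ¬Group.IsSolvable (E n ≃ₐ[F n] E n) := fun _ =>
  Equiv.Perm.not_isSolvable (Fin n) (by simpa using hn)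
    (Group.isSolvable_of_isSolvable_injective (renameAlgEquivHom_injective n))

theorem irreducible_generalPoly [NeZero n] : Irreducible (generalPoly n) :=
  irreducible_of_map_eq_prod_of_forall_exists_algEquiv (generalPoly_monic n) (s_injective n)
    (map_generalPoly n) fun i j =>
      ⟨renameAlgEquiv n (Equiv.swap i j), by rw [renameAlgEquiv_s, Equiv.swap_apply_left]⟩

end AbelRuffini

/-- **Abel–Ruffini theorem**: for `n ≥ 5`, no root of the general monic polynomial of
degree `n` lies in `solvableByRad F Ē`, i.e. no root can be obtained from the coefficients
by `+`, `-`, `×`, `÷` and extraction of `m`-th roots. -/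
theorem abel_ruffini (n : ℕ) (hn : 5 ≤ n) (i : Fin n) :
    algebraMap (E n) (AlgebraicClosure (E n)) (s n i) ∉
      solvableByRad (F n) (AlgebraicClosure (E n)) := by
  have : NeZero n := ⟨by omega⟩
  have := AbelRuffini.isSplittingField_generalPoly n
  refine notMem_solvableByRad_of_isSplittingField (AbelRuffini.irreducible_generalPoly n)
    (AbelRuffini.not_isSolvable_algEquiv n hn) ?_
  rw [Polynomial.aeval_algebraMap_apply,
    aeval_eq_zero_of_map_eq_prod (AbelRuffini.map_generalPoly n) i, map_zero]
end

section
/- For every natural number n with 1 ≤ n ≤ 4 and every index i : Fin n, the root s i, viewed inside the algebraic closure Ē of E, lies in solvableByRad F Ē: every root of the general monic equation of degree at most 4 can be expressed from the coefficients using +, −, ×, ÷ and extraction of roots. -/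
open MvPolynomial

/-!
The coefficients of `∏ i, (Y - s i)` are, up to sign, the elementary symmetric functions of the
`s i`, and these generate `F`. So it suffices that, in an algebraically closed field of
characteristic zero, the roots of a polynomial of degree at most four whose coefficients are
solvable by radicals are solvable by radicals. This is the classical solution by radicals:
* degree 2: `x - y` is a square root of `(x + y) ^ 2 - 4 x y`;
* degree 3 (Lagrange): for a primitive cube root of unity `ω`, the cubes of the resolvents
  `x + ω y + ω² z` and `x + ω² y + ω z` are the roots of a quadratic, and `x, y, z` are linear
  combinations of these resolvents and `x + y + z`;
* degree 4 (Ferrari): the squares of `a + b - c - d`, `a - b + c - d` and `a - b - c + d` are the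
  roots of a cubic, and `a, b, c, d` are linear combinations of these sums and `a + b + c + d`.
-/

namespace solvableByRad

variable {K L : Type*} [Field K] [Field L] [Algebra K L] [CharZero L]

theorem mem_of_quadratic {x y : L} (h₁ : x + y ∈ solvableByRad K L)
    (h₂ : x * y ∈ solvableByRad K L) : x ∈ solvableByRad K L ∧ y ∈ solvableByRad K L := by
  have hδ : x - y ∈ solvableByRad K L := by
    refine rad_mem two_ne_zero ?_
    rw [show (x - y) ^ 2 = (x + y) ^ 2 - 4 * (x * y) by ring]
    -- `aesop`'s simp normalization would undo such rewrites, so it is switched off throughout.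
    aesop (config := { enableSimp := false })
  constructor
  · rw [show x = ((x + y) + (x - y)) / 2 by ring]
    aesop (config := { enableSimp := false })
  · rw [show y = ((x + y) - (x - y)) / 2 by ring]
    aesop (config := { enableSimp := false })

variable [IsAlgClosed L]

theorem exists_primitive_cube_root_of_unity_mem :
    ∃ ω ∈ solvableByRad K L, ω ^ 2 + ω + 1 = 0 := by
  obtain ⟨r, hr⟩ := IsAlgClosed.exists_eq_mul_self (-3 : L)
  have hr_mem : r ∈ solvableByRad K L := by
    refine rad_mem two_ne_zero ?_
    rw [sq, ← hr]
    aesop (config := { enableSimp := false })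
  exact ⟨(-1 + r) / 2, div_mem (add_mem (neg_mem (one_mem _)) hr_mem) (ofNat_mem _ 2), by grind⟩

theorem mem_of_cubic {x y z : L} (h₁ : x + y + z ∈ solvableByRad K L)
    (h₂ : x * y + x * z + y * z ∈ solvableByRad K L) (h₃ : x * y * z ∈ solvableByRad K L) :
    x ∈ solvableByRad K L ∧ y ∈ solvableByRad K L ∧ z ∈ solvableByRad K L := by
  obtain ⟨ω, hω_mem, hω⟩ := exists_primitive_cube_root_of_unity_mem (K := K) (L := L)
  obtain ⟨u, hu_def⟩ : ∃ u, u = x + ω * y + ω ^ 2 * z := ⟨_, rfl⟩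
  obtain ⟨v, hv_def⟩ : ∃ v, v = x + ω ^ 2 * y + ω * z := ⟨_, rfl⟩
  obtain ⟨hu₃, hv₃⟩ : u ^ 3 ∈ solvableByRad K L ∧ v ^ 3 ∈ solvableByRad K L := by
    refine mem_of_quadratic ?_ ?_
    · rw [show u ^ 3 + v ^ 3 = 2 * (x + y + z) ^ 3 - 9 * (x + y + z) * (x * y + x * z + y * z)
        + 27 * (x * y * z) by grind]
      aesop (config := { enableSimp := false })
    · rw [← mul_pow, show u * v = (x + y + z) ^ 2 - 3 * (x * y + x * z + y * z) by grind]
      aesop (config := { enableSimp := false })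
  have hu := rad_mem three_ne_zero hu₃
  have hv := rad_mem three_ne_zero hv₃
  refine ⟨?_, ?_, ?_⟩
  · rw [show x = (x + y + z + u + v) / 3 by grind]
    aesop (config := { enableSimp := false })
  · rw [show y = (x + y + z + ω ^ 2 * u + ω * v) / 3 by grind]
    aesop (config := { enableSimp := false })
  · rw [show z = (x + y + z + ω * u + ω ^ 2 * v) / 3 by grind]
    aesop (config := { enableSimp := false })

theorem mem_of_quartic {a b c d : L} (h₁ : a + b + c + d ∈ solvableByRad K L)
    (h₂ : a * b + a * c + a * d + b * c + b * d + c * d ∈ solvableByRad K L)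
    (h₃ : a * b * c + a * b * d + a * c * d + b * c * d ∈ solvableByRad K L)
    (h₄ : a * b * c * d ∈ solvableByRad K L) :
    a ∈ solvableByRad K L ∧ b ∈ solvableByRad K L ∧ c ∈ solvableByRad K L ∧
      d ∈ solvableByRad K L := by
  obtain ⟨t₁, ht₁_def⟩ : ∃ t, t = a + b - c - d := ⟨_, rfl⟩
  obtain ⟨t₂, ht₂_def⟩ : ∃ t, t = a - b + c - d := ⟨_, rfl⟩
  obtain ⟨t₃, ht₃_def⟩ : ∃ t, t = a - b - c + d := ⟨_, rfl⟩
  obtain ⟨hs₁, hs₂, hs₃⟩ : t₁ ^ 2 ∈ solvableByRad K L ∧ t₂ ^ 2 ∈ solvableByRad K L ∧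
      t₃ ^ 2 ∈ solvableByRad K L := by
    refine mem_of_cubic ?_ ?_ ?_
    · rw [show t₁ ^ 2 + t₂ ^ 2 + t₃ ^ 2 =
        3 * (a + b + c + d) ^ 2 - 8 * (a * b + a * c + a * d + b * c + b * d + c * d) by
        subst_vars; ring]
      aesop (config := { enableSimp := false })
    · rw [show t₁ ^ 2 * t₂ ^ 2 + t₁ ^ 2 * t₃ ^ 2 + t₂ ^ 2 * t₃ ^ 2 =
        3 * (a + b + c + d) ^ 4
          - 16 * (a + b + c + d) ^ 2 * (a * b + a * c + a * d + b * c + b * d + c * d)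
          + 16 * (a * b + a * c + a * d + b * c + b * d + c * d) ^ 2
          + 16 * (a + b + c + d) * (a * b * c + a * b * d + a * c * d + b * c * d)
          - 64 * (a * b * c * d) by subst_vars; ring]
      aesop (config := { enableSimp := false })
    · rw [← mul_pow, ← mul_pow, show t₁ * t₂ * t₃ =
        (a + b + c + d) ^ 3
          - 4 * (a + b + c + d) * (a * b + a * c + a * d + b * c + b * d + c * d)
          + 8 * (a * b * c + a * b * d + a * c * d + b * c * d) by subst_vars; ring]
      aesop (config := { enableSimp := false })
  have ht₁ := rad_mem two_ne_zero hs₁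
  have ht₂ := rad_mem two_ne_zero hs₂
  have ht₃ := rad_mem two_ne_zero hs₃
  refine ⟨?_, ?_, ?_, ?_⟩
  · rw [show a = (a + b + c + d + t₁ + t₂ + t₃) / 4 by subst_vars; ring]
    aesop (config := { enableSimp := false })
  · rw [show b = (a + b + c + d + t₁ - t₂ - t₃) / 4 by subst_vars; ring]
    aesop (config := { enableSimp := false })
  · rw [show c = (a + b + c + d - t₁ + t₂ - t₃) / 4 by subst_vars; ring]
    aesop (config := { enableSimp := false })
  · rw [show d = (a + b + c + d - t₁ - t₂ + t₃) / 4 by subst_vars; ring]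
    aesop (config := { enableSimp := false })

theorem forall_mem_of_esymm_mem {m : Multiset L} (hm : Multiset.card m ≤ 4)
    (h : ∀ k, m.esymm k ∈ solvableByRad K L) : ∀ x ∈ m, x ∈ solvableByRad K L := by
  have hesymm : ∀ k y, m.esymm k = y → y ∈ solvableByRad K L := fun k y hy => hy ▸ h k
  obtain hc | hc | hc | hc | hc : Multiset.card m = 0 ∨ Multiset.card m = 1 ∨
      Multiset.card m = 2 ∨ Multiset.card m = 3 ∨ Multiset.card m = 4 := by omega
  · simp [Multiset.card_eq_zero.1 hc]
  · obtain ⟨a, rfl⟩ := Multiset.card_eq_one.1 hc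
    simpa [Multiset.esymm, Multiset.powersetCard_one] using h 1
  · obtain ⟨a, b, rfl⟩ := Multiset.card_eq_two.1 hc
    have hab := mem_of_quadratic (hesymm 1 (a + b) ?_) (hesymm 2 _ ?_)
    · simpa using hab
    all_goals simp
  · obtain ⟨a, b, c, rfl⟩ := Multiset.card_eq_three.1 hc
    have habc := mem_of_cubic (hesymm 1 (a + b + c) ?_) (hesymm 2 _ ?_) (hesymm 3 _ ?_)
    · simpa using habc
    all_goals simp [Multiset.esymm, Multiset.powersetCard_one, Multiset.powersetCard_cons]; ring
  · obtain ⟨a, b, c, d, rfl⟩ := Multiset.card_eq_four.1 hc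
    have habcd := mem_of_quartic (hesymm 1 (a + b + c + d) ?_) (hesymm 2 _ ?_) (hesymm 3 _ ?_)
      (hesymm 4 _ ?_)
    · simpa using habcd
    all_goals simp [Multiset.esymm, Multiset.powersetCard_one, Multiset.powersetCard_cons]; ring

end solvableByRad

theorem algebraMap_mem_solvableByRad {E L : Type*} [Field E] [Field L] [Algebra E L]
    {F : Subfield E} {x : E} (hx : x ∈ F) : algebraMap E L x ∈ solvableByRad F L :=
  (solvableByRad F L).algebraMap_mem ⟨x, hx⟩

theorem esymm_roots_mem_solvableByRad (n k : ℕ) :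
    (Finset.univ.val.map fun i => algebraMap (E n) (AlgebraicClosure (E n)) (s n i)).esymm k ∈
      solvableByRad (F n) (AlgebraicClosure (E n)) := by
  obtain hkn | hkn := lt_or_ge n k
  · rw [Multiset.esymm, Multiset.powersetCard_eq_empty _ (by simpa using hkn)]
    exact zero_mem _
  obtain rfl | hk := eq_or_ne k 0
  · simp [Multiset.esymm]
  let φ : MvPolynomial (Fin n) ℚ →ₐ[ℚ] AlgebraicClosure (E n) :=
    (IsScalarTower.toAlgHom ℚ (E n) (AlgebraicClosure (E n))).comp
      (IsScalarTower.toAlgHom ℚ _ (E n))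
  change (Finset.univ.val.map (φ ∘ X)).esymm k ∈ _
  rw [← aeval_esymm_eq_multiset_esymm (σ := Fin n) (R := ℚ), ← aeval_unique φ]
  obtain ⟨j, rfl⟩ : ∃ j : Fin n, (j : ℕ) + 1 = k := ⟨⟨k - 1, by omega⟩, by simp; omega⟩
  exact algebraMap_mem_solvableByRad (Subfield.subset_closure ⟨j, rfl⟩)

theorem solvable_of_degree_le_four_general (n : ℕ) (hn₄ : n ≤ 4) (i : Fin n) :
    algebraMap (E n) (AlgebraicClosure (E n)) (s n i) ∈
      solvableByRad (F n) (AlgebraicClosure (E n)) :=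
  solvableByRad.forall_mem_of_esymm_mem (by simpa using hn₄) (esymm_roots_mem_solvableByRad n) _
    (Multiset.mem_map_of_mem _ (Finset.mem_univ i))

/-- For `1 ≤ n ≤ 4`, every root of the general monic equation of degree `n` lies in
`solvableByRad F Ē`: it can be expressed from the coefficients using `+`, `-`, `×`, `÷`
and extraction of roots. -/
theorem solvable_of_degree_le_four (n : ℕ) (hn₁ : 1 ≤ n) (hn₄ : n ≤ 4) (i : Fin n) :
    algebraMap (E n) (AlgebraicClosure (E n)) (s n i) ∈
      solvableByRad (F n) (AlgebraicClosure (E n)) :=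
  solvable_of_degree_le_four_general n hn₄ i
end

section
/- For every natural number n ≥ 2, the root s 0 does not lie in the subfield F: no root of the general monic polynomial of degree n ≥ 2 is a rational expression (built using only +, −, ×, ÷) in its coefficients (the paper's first impossibility result). -/
open MvPolynomial

/-- **First impossibility result**: for `n ≥ 2`, no root of the general monic polynomial of
degree `n` is a rational expression (using only `+`, `-`, `×`, `÷`) in its coefficients,
i.e. the root `s 0` does not lie in the subfield `F` generated by the coefficients. -/
theorem first_impossibility (n : ℕ) (hn : 2 ≤ n) :
    s n ⟨0, by omega⟩ ∉ F n := by
  set i0 : Fin n := ⟨0, by omega⟩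
  set i1 : Fin n := ⟨1, by omega⟩
  -- the automorphism of polynomials swapping X 0 and X 1
  set τ : MvPolynomial (Fin n) ℚ ≃+* MvPolynomial (Fin n) ℚ :=
    (renameEquiv ℚ (Equiv.swap i0 i1)).toRingEquiv with hτ
  have hmap : (nonZeroDivisors (MvPolynomial (Fin n) ℚ)).map τ.toMonoidHom
      = nonZeroDivisors (MvPolynomial (Fin n) ℚ) :=
    MulEquivClass.map_nonZeroDivisors τ
  set σ : E n ≃+* E n :=
    IsLocalization.ringEquivOfRingEquiv (E n) (E n) τ hmap with hσ
  have hσa : ∀ p : MvPolynomial (Fin n) ℚ,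
      σ (algebraMap _ (E n) p) = algebraMap _ (E n) (τ p) := fun p =>
    IsLocalization.ringEquivOfRingEquiv_eq hmap p
  have hle : F n ≤ RingHom.eqLocusField (σ : E n →+* E n) (RingHom.id _) := by
    apply Subfield.closure_le.2
    rintro x ⟨k, rfl⟩
    show σ _ = _
    rw [hσa]
    have h : τ (esymm (Fin n) ℚ ((k : ℕ) + 1)) = esymm (Fin n) ℚ ((k : ℕ) + 1) := by
      show rename (Equiv.swap i0 i1) (esymm (Fin n) ℚ ((k : ℕ) + 1)) = _
      exact rename_esymm (R := ℚ) (n := (k : ℕ) + 1) (e := Equiv.swap i0 i1)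
    rw [h]; rfl
  intro hmem
  have h1 : σ (s n i0) = s n i0 := hle hmem
  have h2 : σ (s n i0) = s n i1 := by
    rw [s, hσa]
    have h : τ (X i0) = X i1 := by
      show rename (Equiv.swap i0 i1) (X i0) = X i1
      simp [rename_X, Equiv.swap_apply_left]
    rw [h]; rfl
  rw [h2] at h1
  have hinj := IsFractionRing.injective (MvPolynomial (Fin n) ℚ) (E n)
  have : (X i1 : MvPolynomial (Fin n) ℚ) = X i0 := hinj h1
  have hne : i0 ≠ i1 := by simp [i0, i1, Fin.ext_iff]
  exact hne ((X_injective.eq_iff.mp this).symm)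
end

section
/- For every natural number n ≥ 3, the root s 0 does not lie in Rad F: no root of the general monic polynomial of degree n ≥ 3 can be written as a rational expression in the coefficients together with single (un-nested) radicals of such rational expressions (the paper's second impossibility result). -/
/-! The cyclic permutation `i ↦ i + 1` of the variables induces an automorphism `σ` of `E n`
fixing `F n`. If `y ^ m ∈ F n`, then `σ y / y` is an `m`-th root of unity of `E n`, hence `±1`,
so `σ ∘ σ` fixes `y`; thus `σ ∘ σ` fixes all of `Rad (F n)`. For `n ≥ 3` it moves `s 0` to
`s 2`. -/

open MvPolynomial

/-- For a subfield `K` of a field `L`, `Rad K` is the subfield of `L` generated by `K`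
together with all elements `y` such that `y ^ m ∈ K` for some integer `m ≥ 1`. -/
def Rad {L : Type*} [Field L] (K : Subfield L) : Subfield L :=
  Subfield.closure ((K : Set L) ∪ {y : L | ∃ m : ℕ, 1 ≤ m ∧ y ^ m ∈ K})

theorem MvPolynomial.eq_one_or_eq_neg_one_of_pow_eq_one {ι R : Type*} [CommRing R]
    [LinearOrder R] [IsStrictOrderedRing R] {p : MvPolynomial ι R} {m : ℕ} (hm : m ≠ 0)
    (h : p ^ m = 1) :
    p = 1 ∨ p = -1 := by
  obtain ⟨r, -, rfl⟩ := isUnit_iff_eq_C_of_isReduced.mp (IsUnit.of_pow_eq_one h hm)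
  have hr : r ^ m = 1 := C_injective ι R (by rw [map_pow, h, C_1])
  rcases (pow_eq_one_iff_of_ne_zero hm).mp hr with rfl | ⟨rfl, -⟩
  · exact .inl C_1
  · exact .inr (by rw [C_neg, C_1])

theorem IsFractionRing.eq_one_or_eq_neg_one_of_pow_eq_one {A K : Type*} [CommRing A]
    [IsIntegrallyClosed A] [Field K] [Algebra A K] [IsFractionRing A K]
    (hA : ∀ a : A, ∀ m ≠ 0, a ^ m = 1 → a = 1 ∨ a = -1) {ζ : K} {m : ℕ} (hm : m ≠ 0)
    (h : ζ ^ m = 1) : ζ = 1 ∨ ζ = -1 := by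
  have hζ : IsIntegral A ζ := .of_pow (Nat.pos_of_ne_zero hm) (h ▸ isIntegral_one)
  obtain ⟨a, rfl⟩ := IsIntegrallyClosed.isIntegral_iff.mp hζ
  have ha : a ^ m = 1 := IsFractionRing.injective A K (by rw [map_pow, h, map_one])
  rcases hA a m hm ha with rfl | rfl
  · exact .inl (map_one _)
  · exact .inr (by rw [map_neg, map_one])

theorem apply_apply_eq_self_of_mem_Rad {L : Type*} [Field L]
    (hL : ∀ ζ : L, ∀ m ≠ 0, ζ ^ m = 1 → ζ = 1 ∨ ζ = -1) {K : Subfield L} {σ : L ≃+* L}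
    (hσ : ∀ x ∈ K, σ x = x) {x : L} (hx : x ∈ Rad K) : σ (σ x) = x := by
  suffices Rad K ≤ RingHom.eqLocusField (σ.toRingHom.comp σ.toRingHom) (RingHom.id L) from
    this hx
  rw [Rad, Subfield.closure_le]
  rintro y (hy | ⟨m, hm, hym⟩)
  · change σ (σ y) = y
    rw [hσ y hy, hσ y hy]
  · change σ (σ y) = y
    obtain rfl | hy0 := eq_or_ne y 0
    · simp only [map_zero]
    have hζ : (σ y / y) ^ m = 1 := by
      rw [div_pow, ← map_pow, hσ _ hym, div_self (pow_ne_zero _ hy0)]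
    obtain h | h := hL _ m (by omega) hζ
    · rw [div_eq_one_iff_eq hy0] at h
      rw [h, h]
    · rw [div_eq_iff hy0, neg_one_mul] at h
      rw [h, map_neg, h, neg_neg]

theorem E_eq_one_or_eq_neg_one_of_pow_eq_one (n : ℕ) {ζ : E n} {m : ℕ} (hm : m ≠ 0)
    (h : ζ ^ m = 1) : ζ = 1 ∨ ζ = -1 :=
  IsFractionRing.eq_one_or_eq_neg_one_of_pow_eq_one (A := MvPolynomial (Fin n) ℚ)
    (fun _ _ ↦ MvPolynomial.eq_one_or_eq_neg_one_of_pow_eq_one (R := ℚ)) hm h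

theorem s_injective (n : ℕ) : Function.Injective (s n) :=
  fun _ _ h ↦ X_injective (IsFractionRing.injective (MvPolynomial (Fin n) ℚ) (E n) h)

noncomputable def permRingEquiv (n : ℕ) (c : Equiv.Perm (Fin n)) : E n ≃+* E n :=
  IsFractionRing.ringEquivOfRingEquiv (renameEquiv ℚ c).toRingEquiv

theorem permRingEquiv_algebraMap (n : ℕ) (c : Equiv.Perm (Fin n))
    (p : MvPolynomial (Fin n) ℚ) :
    permRingEquiv n c (algebraMap _ (E n) p) = algebraMap _ (E n) (rename c p) :=
  IsFractionRing.ringEquivOfRingEquiv_algebraMap _ p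

theorem permRingEquiv_s (n : ℕ) (c : Equiv.Perm (Fin n)) (i : Fin n) :
    permRingEquiv n c (s n i) = s n (c i) := by
  rw [s, permRingEquiv_algebraMap, rename_X, s]

theorem permRingEquiv_apply_of_mem_F (n : ℕ) (c : Equiv.Perm (Fin n)) {x : E n} (hx : x ∈ F n) :
    permRingEquiv n c x = x := by
  suffices F n ≤ RingHom.eqLocusField (permRingEquiv n c).toRingHom (RingHom.id (E n)) from
    this hx
  rw [F, Subfield.closure_le]
  rintro _ ⟨k, rfl⟩
  exact (permRingEquiv_algebraMap n c _).trans (by rw [rename_esymm]; rfl)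

/-- **Second impossibility result**: for `n ≥ 3`, no root of the general monic polynomial of
degree `n` can be written as a rational expression in the coefficients together with single
(un-nested) radicals of such rational expressions: `s 0 ∉ Rad F`. -/
theorem second_impossibility (n : ℕ) (hn : 3 ≤ n) :
    s n ⟨0, by omega⟩ ∉ Rad (F n) := by
  intro hmem
  have hfix := apply_apply_eq_self_of_mem_Rad (fun _ _ ↦ E_eq_one_or_eq_neg_one_of_pow_eq_one n)
    (fun _ ↦ permRingEquiv_apply_of_mem_F n (finRotate n)) hmem
  rw [permRingEquiv_s, permRingEquiv_s, (s_injective n).eq_iff, finRotate_apply,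
    finRotate_apply, Fin.ext_iff, Fin.val_add, Fin.val_add] at hfix
  simp [Nat.mod_eq_of_lt (by omega : 1 < n), Nat.mod_eq_of_lt (by omega : 2 < n)] at hfix
end

section
/- Let k ≥ 1 be a natural number, let z₀ ∈ ℂ be nonzero, and let γ₁, γ₂ : [0,1] → ℂ be continuous loops based at z₀ that never take the value 0. Let Γ : [0,1] → ℂ be the concatenated commutator loop γ₁ · γ₂ · γ₁⁻¹ · γ₂⁻¹ (traverse γ₁ on [0,1/4], then γ₂ on [1/4,1/2], then γ₁ reversed on [1/2,3/4], then γ₂ reversed on [3/4,1]). If ζ : [0,1] → ℂ is continuous with ζ(t)^k = Γ(t) for all t, then ζ(1) = ζ(0): along a commutator of loops, every continuously-varying k-th root returns to its starting value. -/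
/-!
Whenever `Γ(t)` and `Γ(t')` agree, `ζ(t)` and `ζ(t')` are `k`-th roots of the same number, so
their ratio is a root of unity. The commutator traverses each `γᵢ` twice, once forwards and once
backwards; along the two traversals the ratio of the values of `ζ` varies continuously in a
finite set, hence is constant. Comparing its values at the two ends of each traversal gives
`ζ(0) ζ(1/2) = ζ(1/4) ζ(3/4) = ζ(1/2) ζ(1)`, and `ζ(1/2) ≠ 0`.
-/

/-- The commutator loop `γ₁ · γ₂ · γ₁⁻¹ · γ₂⁻¹` of two loops `γ₁, γ₂` on `[0,1]`:
traverse `γ₁` on `[0,1/4]`, then `γ₂` on `[1/4,1/2]`, then `γ₁` reversed on `[1/2,3/4]`,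
then `γ₂` reversed on `[3/4,1]`. -/
noncomputable def commutatorLoop (γ₁ γ₂ : ℝ → ℂ) (t : ℝ) : ℂ :=
  if t ≤ 1 / 4 then γ₁ (4 * t)
  else if t ≤ 1 / 2 then γ₂ (4 * t - 1)
  else if t ≤ 3 / 4 then γ₁ (1 - (4 * t - 2))
  else γ₂ (1 - (4 * t - 3))

open Set

theorem IsPreconnected.mul_eq_mul_of_pow_eq_pow {α 𝕜 : Type*} [TopologicalSpace α]
    [TopologicalSpace 𝕜] [T1Space 𝕜] [Field 𝕜] [ContinuousInv₀ 𝕜] [ContinuousMul 𝕜]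
    {S : Set α} (hS : IsPreconnected S) {k : ℕ} (hk : k ≠ 0) {f g : α → 𝕜}
    (hf : ContinuousOn f S) (hg : ContinuousOn g S) (hg0 : ∀ x ∈ S, g x ≠ 0)
    (hfg : ∀ x ∈ S, f x ^ k = g x ^ k) {x y : α} (hx : x ∈ S) (hy : y ∈ S) :
    f x * g y = f y * g x := by
  classical
  have hmaps : MapsTo (fun z => f z / g z) S (Polynomial.nthRoots k (1 : 𝕜)).toFinset := by
    intro z hz
    simp [Polynomial.mem_nthRoots (Nat.pos_of_ne_zero hk), div_pow, hfg z hz,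
      pow_ne_zero k (hg0 z hz)]
  have hconst : f x / g x = f y / g y :=
    hS.constant_of_mapsTo (toFinite _).isDiscrete (hf.div hg hg0) hmaps hx hy
  rwa [div_eq_div_iff (hg0 x hx) (hg0 y hy)] at hconst

section commutatorLoop

variable {γ₁ γ₂ : ℝ → ℂ} {s : ℝ}

theorem commutatorLoop_ne_zero (hne₁ : ∀ t ∈ Icc (0 : ℝ) 1, γ₁ t ≠ 0)
    (hne₂ : ∀ t ∈ Icc (0 : ℝ) 1, γ₂ t ≠ 0) : ∀ t ∈ Icc (0 : ℝ) 1, commutatorLoop γ₁ γ₂ t ≠ 0 := by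
  rintro t ⟨ht₀, ht₁⟩
  unfold commutatorLoop
  split_ifs
  · exact hne₁ _ ⟨by linarith, by linarith⟩
  · exact hne₂ _ ⟨by linarith, by linarith⟩
  · exact hne₁ _ ⟨by linarith, by linarith⟩
  · exact hne₂ _ ⟨by linarith, by linarith⟩

theorem commutatorLoop_div_four (hs : s ∈ Icc (0 : ℝ) 1) : commutatorLoop γ₁ γ₂ (s / 4) = γ₁ s := by
  rw [commutatorLoop, if_pos (by linarith [hs.2])]
  ring_nf

theorem commutatorLoop_three_sub_div_four (h : γ₂ 1 = γ₁ 1) (hs : s ∈ Icc (0 : ℝ) 1) :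
    commutatorLoop γ₁ γ₂ ((3 - s) / 4) = γ₁ s := by
  obtain ⟨hs₀, hs₁⟩ := hs
  rcases hs₁.lt_or_eq with hs₁ | rfl
  · rw [commutatorLoop, if_neg (by linarith), if_neg (by linarith), if_pos (by linarith)]
    ring_nf
  · norm_num [commutatorLoop, h]

theorem commutatorLoop_add_one_div_four (h : γ₁ 1 = γ₂ 0) (hs : s ∈ Icc (0 : ℝ) 1) :
    commutatorLoop γ₁ γ₂ ((s + 1) / 4) = γ₂ s := by
  obtain ⟨hs₀, hs₁⟩ := hs
  rcases hs₀.lt_or_eq with hs₀ | rfl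
  · rw [commutatorLoop, if_neg (by linarith), if_pos (by linarith)]
    ring_nf
  · norm_num [commutatorLoop, h]

theorem commutatorLoop_four_sub_div_four (h : γ₁ 0 = γ₂ 1) (hs : s ∈ Icc (0 : ℝ) 1) :
    commutatorLoop γ₁ γ₂ ((4 - s) / 4) = γ₂ s := by
  obtain ⟨hs₀, hs₁⟩ := hs
  rcases hs₁.lt_or_eq with hs₁ | rfl
  · rw [commutatorLoop, if_neg (by linarith), if_neg (by linarith), if_neg (by linarith)]
    ring_nf
  · norm_num [commutatorLoop, h]

end commutatorLoop

theorem mul_eq_mul_of_pow_eq_of_comp_eq {k : ℕ} (hk : k ≠ 0) {Γ ζ : ℝ → ℂ}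
    (hζ : ContinuousOn ζ (Icc 0 1)) (hroot : ∀ t ∈ Icc (0 : ℝ) 1, ζ t ^ k = Γ t)
    (hΓ : ∀ t ∈ Icc (0 : ℝ) 1, Γ t ≠ 0) {φ ψ : ℝ → ℝ} (hφ : Continuous φ) (hψ : Continuous ψ)
    (hφI : MapsTo φ (Icc 0 1) (Icc 0 1)) (hψI : MapsTo ψ (Icc 0 1) (Icc 0 1))
    (hΓφψ : ∀ s ∈ Icc (0 : ℝ) 1, Γ (φ s) = Γ (ψ s)) :
    ζ (φ 0) * ζ (ψ 1) = ζ (φ 1) * ζ (ψ 0) :=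
  isPreconnected_Icc.mul_eq_mul_of_pow_eq_pow hk (hζ.comp hφ.continuousOn hφI)
    (hζ.comp hψ.continuousOn hψI)
    (fun s hs => ne_zero_pow hk ((hroot _ (hψI hs)).trans_ne (hΓ _ (hψI hs))))
    (fun s hs => by
      dsimp only [Function.comp]
      rw [hroot _ (hφI hs), hroot _ (hψI hs), hΓφψ s hs])
    (left_mem_Icc.2 zero_le_one) (right_mem_Icc.2 zero_le_one)

theorem kth_root_loop_along_commutator_general (k : ℕ) (hk : 1 ≤ k) (z₀ : ℂ)
    (γ₁ γ₂ : ℝ → ℂ)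
    (h₁₀ : γ₁ 0 = z₀) (h₁₁ : γ₁ 1 = z₀) (h₂₀ : γ₂ 0 = z₀) (h₂₁ : γ₂ 1 = z₀)
    (hne₁ : ∀ t ∈ Set.Icc (0 : ℝ) 1, γ₁ t ≠ 0) (hne₂ : ∀ t ∈ Set.Icc (0 : ℝ) 1, γ₂ t ≠ 0)
    (ζ : ℝ → ℂ) (hζ : ContinuousOn ζ (Set.Icc 0 1))
    (hroot : ∀ t ∈ Set.Icc (0 : ℝ) 1, ζ t ^ k = commutatorLoop γ₁ γ₂ t) :
    ζ 1 = ζ 0 := by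
  have hk₀ : k ≠ 0 := by omega
  have hΓ := commutatorLoop_ne_zero hne₁ hne₂
  have h₁ : ζ 0 * ζ (1 / 2) = ζ (1 / 4) * ζ (3 / 4) := by
    convert mul_eq_mul_of_pow_eq_of_comp_eq hk₀ hζ hroot hΓ (φ := (· / 4))
      (ψ := fun s => (3 - s) / 4) (by fun_prop) (by fun_prop)
      (fun s hs => ⟨by linarith [hs.1], by linarith [hs.2]⟩)
      (fun s hs => ⟨by linarith [hs.2], by linarith [hs.1]⟩)
      (fun s hs => by rw [commutatorLoop_div_four hs,
        commutatorLoop_three_sub_div_four (h₂₁.trans h₁₁.symm) hs]) using 2 <;> norm_num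
  have h₂ : ζ (1 / 4) * ζ (3 / 4) = ζ (1 / 2) * ζ 1 := by
    convert mul_eq_mul_of_pow_eq_of_comp_eq hk₀ hζ hroot hΓ (φ := fun s => (s + 1) / 4)
      (ψ := fun s => (4 - s) / 4) (by fun_prop) (by fun_prop)
      (fun s hs => ⟨by linarith [hs.1], by linarith [hs.2]⟩)
      (fun s hs => ⟨by linarith [hs.2], by linarith [hs.1]⟩)
      (fun s hs => by rw [commutatorLoop_add_one_div_four (h₁₁.trans h₂₀.symm) hs,
        commutatorLoop_four_sub_div_four (h₁₀.trans h₂₁.symm) hs]) using 2 <;> norm_num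
  have hhalf : (1 / 2 : ℝ) ∈ Icc 0 1 := ⟨by norm_num, by norm_num⟩
  have hζhalf : ζ (1 / 2) ≠ 0 := ne_zero_pow hk₀ ((hroot _ hhalf).trans_ne (hΓ _ hhalf))
  exact mul_left_cancel₀ hζhalf (by linear_combination -h₁ - h₂)

/-- Along a commutator of loops based at `z₀ ≠ 0` and avoiding `0`, every
continuously-varying `k`-th root returns to its starting value: `ζ 1 = ζ 0`. -/
theorem kth_root_loop_along_commutator (k : ℕ) (hk : 1 ≤ k) (z₀ : ℂ) (hz₀ : z₀ ≠ 0)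
    (γ₁ γ₂ : ℝ → ℂ)
    (hγ₁ : ContinuousOn γ₁ (Set.Icc 0 1)) (hγ₂ : ContinuousOn γ₂ (Set.Icc 0 1))
    (h₁₀ : γ₁ 0 = z₀) (h₁₁ : γ₁ 1 = z₀) (h₂₀ : γ₂ 0 = z₀) (h₂₁ : γ₂ 1 = z₀)
    (hne₁ : ∀ t ∈ Set.Icc (0 : ℝ) 1, γ₁ t ≠ 0) (hne₂ : ∀ t ∈ Set.Icc (0 : ℝ) 1, γ₂ t ≠ 0)
    (ζ : ℝ → ℂ) (hζ : ContinuousOn ζ (Set.Icc 0 1))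
    (hroot : ∀ t ∈ Set.Icc (0 : ℝ) 1, ζ t ^ k = commutatorLoop γ₁ γ₂ t) :
    ζ 1 = ζ 0 :=
  kth_root_loop_along_commutator_general k hk z₀ γ₁ γ₂ h₁₀ h₁₁ h₂₀ h₂₁ hne₁ hne₂ ζ hζ hroot
end

section
/- Let α be a finite type with at least 5 elements (for instance Fin n with n ≥ 5). Then every 3-cycle σ ∈ Equiv.Perm α can be written as a commutator of two 3-cycles: there exist 3-cycles τ and ρ with σ = τ ρ τ⁻¹ ρ⁻¹. -/
/-- In a finite type with at least 5 elements, every 3-cycle can be written as a commutator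
of two 3-cycles: `σ = τ ρ τ⁻¹ ρ⁻¹`. -/
theorem isThreeCycle_eq_commutator_of_isThreeCycles {α : Type*} [Fintype α] [DecidableEq α]
    (hcard : 5 ≤ Fintype.card α) (σ : Equiv.Perm α) (hσ : σ.IsThreeCycle) :
    ∃ τ ρ : Equiv.Perm α, τ.IsThreeCycle ∧ ρ.IsThreeCycle ∧ σ = τ * ρ * τ⁻¹ * ρ⁻¹ := by
  classical
  obtain ⟨f⟩ : Nonempty (Fin 5 ↪ α) :=
    Function.Embedding.nonempty_of_card_le (by simpa using hcard)
  set e := f.toEquivRange with he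
  -- explicit three-cycles in `Perm (Fin 5)`
  set σ0 : Equiv.Perm (Fin 5) := Equiv.swap 0 1 * Equiv.swap 1 2 with hσ0def
  set τ0 : Equiv.Perm (Fin 5) := Equiv.swap 0 1 * Equiv.swap 1 3 with hτ0def
  set ρ0 : Equiv.Perm (Fin 5) := Equiv.swap 0 2 * Equiv.swap 2 4 with hρ0def
  have hcomm0 : σ0 = τ0 * ρ0 * τ0⁻¹ * ρ0⁻¹ := by decide
  have hσ0 : σ0.support.card = 3 := by decide
  have hτ0 : τ0.support.card = 3 := by decide
  have hρ0 : ρ0.support.card = 3 := by decide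
  -- extend to `Perm α`
  set σ1 := σ0.extendDomain e with hσ1def
  set τ1 := τ0.extendDomain e with hτ1def
  set ρ1 := ρ0.extendDomain e with hρ1def
  have hσ1 : σ1.IsThreeCycle := by
    rw [← card_support_eq_three_iff, hσ1def, Equiv.Perm.card_support_extend_domain]; exact hσ0
  have hτ1 : τ1.IsThreeCycle := by
    rw [← card_support_eq_three_iff, hτ1def, Equiv.Perm.card_support_extend_domain]; exact hτ0
  have hρ1 : ρ1.IsThreeCycle := by
    rw [← card_support_eq_three_iff, hρ1def, Equiv.Perm.card_support_extend_domain]; exact hρ0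
  have hcomm1 : σ1 = τ1 * ρ1 * τ1⁻¹ * ρ1⁻¹ := by
    rw [hσ1def, hτ1def, hρ1def, hcomm0]
    simp only [Equiv.Perm.extendDomain_inv, ← Equiv.Perm.extendDomain_mul]
  -- conjugate `σ1` to `σ`
  have hconj : IsConj σ1 σ :=
    Equiv.Perm.isConj_of_cycleType_eq (hσ1.cycleType.trans hσ.cycleType.symm)
  obtain ⟨π, hπ⟩ := isConj_iff.mp hconj
  refine ⟨π * τ1 * π⁻¹, π * ρ1 * π⁻¹, ?_, ?_, ?_⟩
  · rw [← card_support_eq_three_iff]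
    simpa using hτ1.card_support
  · rw [← card_support_eq_three_iff]
    simpa using hρ1.card_support
  · rw [← hπ, hcomm1]; group
end
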